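/- arXiv:1712.03602 — 2 statements merged into one kernel-verified Lean document; each statement's English description precedes it below -/
import Mathlib

section
/- If θ and α are independent and each uniformly distributed on [0,π/2], then the random variable X = sin(θ)/cos(α), conditioned (restricted) to values in [0,1), has density h(x) = (4/(π²x))·log((1+x)/(1−x)) for 0 ≤ x < 1, up to the conditioning normalization; equivalently, the unconditioned X has density (2/(π²x))·log|(1+x)/(1−x)| on (0,∞). -/
open MeasureTheory Real Set

/-- The uniform probability measure on the interval `[a,b]`. -/
noncomputable def unif (a b : ℝ) : Measure ℝ :=
  (ENNReal.ofReal (b - a))⁻¹ • volume.restrict (Icc a b)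

/-!
Both `sin θ` and `cos α` have the density `2 / (π √(1 - s²))` on `(0, 1)`, and the quotient of
independent variables with densities `f`, `g` has density `x ↦ ∫ |c| f(c x) g(c) dc`. For `x > 0`
the integrand lives on `0 < c < min 1 x⁻¹` and has the primitive
`-(4 / (π² x)) log (√(1 - c² x²) + x √(1 - c²))`. At the upper endpoint one of the two square
roots vanishes and the other is `√|1 - x²|`, so both cases `x < 1` and `x > 1` give
`(2 / (π² x)) log |(1 + x) / (1 - x)|`.
-/

open scoped ENNReal

instance (a b : ℝ) : SFinite (unif a b) := by
  unfold unif; infer_instance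

lemma unif_eq_smul_restrict_Ioo (a b : ℝ) :
    unif a b = (ENNReal.ofReal (b - a))⁻¹ • volume.restrict (Ioo a b) := by
  rw [unif, Measure.restrict_congr_set Ioo_ae_eq_Icc]

lemma lintegral_eq_lintegral_abs_mul_comp_mul_left {c : ℝ} (hc : c ≠ 0) (g : ℝ → ℝ≥0∞) :
    ∫⁻ y, g y = ∫⁻ x, ENNReal.ofReal |c| * g (c * x) := by
  have hderiv (x : ℝ) (_ : x ∈ univ) : HasDerivWithinAt (c * ·) c univ x := by
    simpa using (hasDerivAt_id x).const_mul c
  simpa [image_univ_of_surjective (mul_left_surjective₀ hc)] using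
    lintegral_image_eq_lintegral_abs_deriv_mul MeasurableSet.univ hderiv
      (mul_right_injective₀ hc).injOn g

theorem map_div_prod_withDensity {f g : ℝ → ℝ≥0∞} (hf : Measurable f) (hg : Measurable g) :
    ((volume.withDensity f).prod (volume.withDensity g)).map (fun p => p.1 / p.2) =
      volume.withDensity (fun x => ∫⁻ c, ENNReal.ofReal |c| * f (c * x) * g c) := by
  have hdiv : Measurable fun p : ℝ × ℝ => p.1 / p.2 := measurable_fst.div measurable_snd
  ext A hA
  rw [Measure.map_apply hdiv hA, prod_withDensity hf hg, withDensity_apply _ (hdiv hA),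
    withDensity_apply _ hA, ← lintegral_indicator hA]
  calc ∫⁻ p in (fun p : ℝ × ℝ => p.1 / p.2) ⁻¹' A, f p.1 * g p.2 ∂volume.prod volume
      = ∫⁻ c, ∫⁻ s, A.indicator 1 (s / c) * f s * g c := by
        rw [← lintegral_indicator (hdiv hA), lintegral_prod_symm _ (by measurability)]
        refine lintegral_congr fun c => lintegral_congr fun s => ?_
        by_cases h : s / c ∈ A <;> simp [h]
    _ = ∫⁻ c, ∫⁻ x, A.indicator (fun x => ENNReal.ofReal |c| * f (c * x) * g c) x := by
        refine lintegral_congr_ae ((volume.ae_ne 0).mono fun c hc => ?_)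
        dsimp only
        rw [lintegral_eq_lintegral_abs_mul_comp_mul_left hc]
        refine lintegral_congr fun x => ?_
        by_cases h : x ∈ A <;> simp [h, mul_div_cancel_left₀ x hc, mul_assoc]
    _ = ∫⁻ x, ∫⁻ c, A.indicator (fun x => ENNReal.ofReal |c| * f (c * x) * g c) x :=
        lintegral_lintegral_swap (Measurable.aemeasurable <|
          (by fun_prop : Measurable fun p : ℝ × ℝ => ENNReal.ofReal |p.1| * f (p.1 * p.2) * g p.1)
            |>.indicator (measurable_snd hA))
    _ = _ := lintegral_congr fun x => by by_cases h : x ∈ A <;> simp [h]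

theorem map_restrict_eq_withDensity {s : Set ℝ} {f f' : ℝ → ℝ} {ρ : ℝ → ℝ≥0∞}
    (hs : MeasurableSet s) (hf : Measurable f) (hf' : ∀ x ∈ s, HasDerivWithinAt f (f' x) s x)
    (hinj : InjOn f s) (hρ : ∀ x ∈ s, ENNReal.ofReal |f' x| * ρ (f x) = 1) :
    (volume.restrict s).map f = (volume.restrict (f '' s)).withDensity ρ := by
  ext A hA
  rw [Measure.map_apply hf hA, withDensity_apply _ hA, ← lintegral_indicator hA,
    lintegral_image_eq_lintegral_abs_deriv_mul hs hf' hinj, ← lintegral_indicator_one (hf hA)]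
  refine setLIntegral_congr_fun hs fun x hx => ?_
  by_cases h : f x ∈ A <;> simp [h, hρ x hx]

theorem lintegral_Ioo_ofReal_deriv_eq_sub {F F' : ℝ → ℝ} {a b : ℝ} (hab : a ≤ b)
    (hcont : ContinuousOn F (Icc a b)) (hderiv : ∀ x ∈ Ioo a b, HasDerivAt F (F' x) x)
    (hnonneg : ∀ x ∈ Ioo a b, 0 ≤ F' x) :
    ∫⁻ x in Ioo a b, ENNReal.ofReal (F' x) = ENNReal.ofReal (F b - F a) := by
  have hint := intervalIntegral.integrableOn_deriv_of_nonneg hcont hderiv hnonneg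
  rw [← intervalIntegral.integral_eq_sub_of_hasDerivAt_of_le hab hcont hderiv
      ((intervalIntegrable_iff_integrableOn_Ioc_of_le hab).2 hint),
    intervalIntegral.integral_of_le hab, integral_Ioc_eq_integral_Ioo,
    ofReal_integral_eq_lintegral_ofReal (hint.mono_set Ioo_subset_Ioc_self)
      (ae_restrict_of_forall_mem measurableSet_Ioo hnonneg)]

noncomputable def arcsineDensity : ℝ → ℝ≥0∞ :=
  (Ioo 0 1).indicator fun s => ENNReal.ofReal (2 / (π * √(1 - s ^ 2)))

lemma measurable_arcsineDensity : Measurable arcsineDensity :=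
  Measurable.indicator (by fun_prop) measurableSet_Ioo

theorem map_unif_eq_withDensity_arcsineDensity {f f' : ℝ → ℝ} (hf : Measurable f)
    (hf' : ∀ θ, HasDerivAt f (f' θ) θ) (hinj : InjOn f (Ioo 0 (π / 2)))
    (himage : f '' Ioo 0 (π / 2) = Ioo 0 1)
    (hf'_abs : ∀ θ ∈ Ioo 0 (π / 2), |f' θ| = √(1 - f θ ^ 2)) :
    (unif 0 (π / 2)).map f = volume.withDensity arcsineDensity := by
  have hρ (θ : ℝ) (hθ : θ ∈ Ioo 0 (π / 2)) :
      ENNReal.ofReal |f' θ| * ENNReal.ofReal (√(1 - f θ ^ 2))⁻¹ = 1 := by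
    have hpos : 0 < √(1 - f θ ^ 2) := by
      have := himage ▸ mem_image_of_mem f hθ
      exact Real.sqrt_pos.2 (by nlinarith [this.1, this.2])
    rw [← ENNReal.ofReal_mul (abs_nonneg _), hf'_abs θ hθ, mul_inv_cancel₀ hpos.ne',
      ENNReal.ofReal_one]
  rw [unif_eq_smul_restrict_Ioo, Measure.map_smul,
    map_restrict_eq_withDensity (ρ := fun y => ENNReal.ofReal (√(1 - y ^ 2))⁻¹) measurableSet_Ioo
      hf (fun θ _ => (hf' θ).hasDerivWithinAt) hinj hρ, himage, arcsineDensity,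
    withDensity_indicator measurableSet_Ioo, ← withDensity_smul' _ _ (by simp [pi_pos])]
  refine congrArg _ (funext fun s => ?_)
  rw [Pi.smul_apply, smul_eq_mul, sub_zero, ← ENNReal.ofReal_inv_of_pos (by positivity),
    ← ENNReal.ofReal_mul (by positivity)]
  congr 1
  field_simp

lemma map_sin_unif : (unif 0 (π / 2)).map sin = volume.withDensity arcsineDensity := by
  have hmono : StrictMonoOn sin (Icc 0 (π / 2)) :=
    strictMonoOn_sin.mono (Icc_subset_Icc (by linarith [pi_pos]) le_rfl)
  refine map_unif_eq_withDensity_arcsineDensity measurable_sin hasDerivAt_sin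
    (hmono.injOn.mono Ioo_subset_Icc_self) ?_ fun θ _ => ?_
  · simpa using continuous_sin.continuousOn.image_Ioo_of_strictMonoOn (by positivity) hmono
  · rw [← cos_sq', sqrt_sq_eq_abs]

lemma map_cos_unif : (unif 0 (π / 2)).map cos = volume.withDensity arcsineDensity := by
  have hanti : StrictAntiOn cos (Icc 0 (π / 2)) :=
    strictAntiOn_cos.mono (Icc_subset_Icc le_rfl (by linarith [pi_pos]))
  refine map_unif_eq_withDensity_arcsineDensity measurable_cos hasDerivAt_cos
    (hanti.injOn.mono Ioo_subset_Icc_self) ?_ fun θ _ => ?_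
  · simpa using continuous_cos.continuousOn.image_Ioo_of_strictAntiOn (by positivity) hanti
  · rw [← sin_sq, sqrt_sq_eq_abs, abs_neg]

section QuotientDensity

variable {x : ℝ}

noncomputable def arcsineQuotientPrimitive (x c : ℝ) : ℝ :=
  -(4 / (π ^ 2 * x)) * log (√(1 - (c * x) ^ 2) + x * √(1 - c ^ 2))

lemma mem_Ioo_min_one_inv_iff (hx : 0 < x) {c : ℝ} :
    c ∈ Ioo 0 (min 1 x⁻¹) ↔ c ∈ Ioo 0 1 ∧ c * x ∈ Ioo 0 1 := by
  simp only [mem_Ioo, lt_min_iff, inv_eq_one_div, lt_div_iff₀ hx, mul_pos_iff_of_pos_right hx]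
  tauto

lemma hasDerivAt_arcsineQuotientPrimitive (hx : 0 < x) {c : ℝ} (hc : c ∈ Ioo 0 (min 1 x⁻¹)) :
    HasDerivAt (arcsineQuotientPrimitive x)
      (c * (2 / (π * √(1 - (c * x) ^ 2))) * (2 / (π * √(1 - c ^ 2)))) c := by
  obtain ⟨⟨hc0, hc1⟩, hcx0, hcx1⟩ := (mem_Ioo_min_one_inv_iff hx).1 hc
  have hA : 0 < 1 - c ^ 2 := by nlinarith
  have hB : 0 < 1 - (c * x) ^ 2 := by nlinarith [mul_pos hc0 hx]
  have hsum : 0 < √(1 - (c * x) ^ 2) + x * √(1 - c ^ 2) := by positivity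
  have hA' : HasDerivAt (fun c => √(1 - c ^ 2)) (-c / √(1 - c ^ 2)) c := by
    convert (((hasDerivAt_id' c).fun_pow 2).const_sub 1).sqrt hA.ne' using 1
    field_simp
    norm_num
    ring
  have hB' : HasDerivAt (fun c => √(1 - (c * x) ^ 2)) (-(c * x ^ 2) / √(1 - (c * x) ^ 2)) c := by
    convert (((hasDerivAt_mul_const x).fun_pow 2).const_sub 1).sqrt hB.ne' using 1
    field_simp
    norm_num
    ring
  refine (((hB'.add (hA'.const_mul x)).log hsum.ne').const_mul (-(4 / (π ^ 2 * x)))).congr_deriv ?_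
  have := pi_pos
  have := Real.sqrt_pos.2 hA
  have := Real.sqrt_pos.2 hB
  simp only [Pi.add_apply]
  generalize √(1 - c ^ 2) = A, √(1 - (c * x) ^ 2) = B at *
  field_simp
  ring

lemma sqrt_add_mul_sqrt_pos (hx : 0 < x) (hx1 : x ≠ 1) {c : ℝ} (hc : c ∈ Icc 0 (min 1 x⁻¹)) :
    0 < √(1 - (c * x) ^ 2) + x * √(1 - c ^ 2) := by
  obtain ⟨hc0, hc⟩ := hc
  rw [le_min_iff, inv_eq_one_div, le_div_iff₀ hx] at hc
  by_contra! h
  have hB := Real.sqrt_nonneg (1 - (c * x) ^ 2)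
  have hA := mul_nonneg hx.le (Real.sqrt_nonneg (1 - c ^ 2))
  have hB0 : 1 - (c * x) ^ 2 ≤ 0 := Real.sqrt_eq_zero'.1 (by linarith)
  have hA0 : 1 - c ^ 2 ≤ 0 :=
    Real.sqrt_eq_zero'.1 ((mul_eq_zero.1 (by linarith : x * √(1 - c ^ 2) = 0)).resolve_left hx.ne')
  have hc1 : c = 1 := by nlinarith
  subst hc1
  exact hx1 (by nlinarith)

lemma continuousOn_arcsineQuotientPrimitive (hx : 0 < x) (hx1 : x ≠ 1) :
    ContinuousOn (arcsineQuotientPrimitive x) (Icc 0 (min 1 x⁻¹)) :=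
  continuousOn_const.mul <| ContinuousOn.log (by fun_prop)
    fun _ hc => (sqrt_add_mul_sqrt_pos hx hx1 hc).ne'

lemma log_sqrt_add_mul_sqrt_min_one_inv (hx : 0 < x) :
    log (√(1 - (min 1 x⁻¹ * x) ^ 2) + x * √(1 - (min 1 x⁻¹) ^ 2)) = log (1 - x ^ 2) / 2 := by
  rcases le_total x 1 with hx1 | hx1
  · rw [min_eq_left ((one_le_inv₀ hx).2 hx1)]
    simp [log_sqrt (by nlinarith : 0 ≤ 1 - x ^ 2)]
  · have : x * √(1 - x⁻¹ ^ 2) = √(x ^ 2 - 1) := by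
      rw [← Real.sqrt_sq hx.le, ← Real.sqrt_mul (sq_nonneg x), Real.sqrt_sq hx.le]
      congr 1
      field_simp
    rw [min_eq_right (inv_le_one_of_one_le₀ hx1), inv_mul_cancel₀ hx.ne', this, one_pow,
      sub_self, Real.sqrt_zero, zero_add, log_sqrt (by nlinarith), ← log_neg_eq_log, neg_sub]

lemma arcsineQuotientPrimitive_min_one_inv_sub_zero (hx : 0 < x) (hx1 : x ≠ 1) :
    arcsineQuotientPrimitive x (min 1 x⁻¹) - arcsineQuotientPrimitive x 0 =
      2 / (π ^ 2 * x) * log |(1 + x) / (1 - x)| := by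
  have h1x : 1 - x ≠ 0 := sub_ne_zero.2 hx1.symm
  have h1x' : 1 + x ≠ 0 := by positivity
  rw [arcsineQuotientPrimitive, arcsineQuotientPrimitive, log_sqrt_add_mul_sqrt_min_one_inv hx,
    log_abs, log_div h1x' h1x, show 1 - x ^ 2 = (1 + x) * (1 - x) by ring, log_mul h1x' h1x]
  simp
  ring

lemma lintegral_arcsineDensity_quotient_of_nonpos (hx : x ≤ 0) :
    ∫⁻ c, ENNReal.ofReal |c| * arcsineDensity (c * x) * arcsineDensity c = 0 := by
  have hzero (c : ℝ) : arcsineDensity (c * x) * arcsineDensity c = 0 := by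
    by_cases hc : 0 < c
    · have : c * x ∉ Ioo 0 1 := fun h => (mul_nonpos_of_nonneg_of_nonpos hc.le hx).not_gt h.1
      simp [arcsineDensity, this]
    · simp [arcsineDensity, hc]
  simp [mul_assoc, hzero]

lemma lintegral_arcsineDensity_quotient_of_pos (hx : 0 < x) (hx1 : x ≠ 1) :
    ∫⁻ c, ENNReal.ofReal |c| * arcsineDensity (c * x) * arcsineDensity c =
      ENNReal.ofReal (2 / (π ^ 2 * x) * log |(1 + x) / (1 - x)|) := by
  have hintegrand : (fun c => ENNReal.ofReal |c| * arcsineDensity (c * x) * arcsineDensity c) =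
      (Ioo 0 (min 1 x⁻¹)).indicator fun c =>
        ENNReal.ofReal (c * (2 / (π * √(1 - (c * x) ^ 2))) * (2 / (π * √(1 - c ^ 2)))) := by
    funext c
    by_cases hc : c ∈ Ioo 0 (min 1 x⁻¹)
    · obtain ⟨hc1, hcx⟩ := (mem_Ioo_min_one_inv_iff hx).1 hc
      have := hc1.1
      rw [indicator_of_mem hc, arcsineDensity, indicator_of_mem hc1, indicator_of_mem hcx,
        abs_of_pos hc1.1, ← ENNReal.ofReal_mul (by positivity),
        ← ENNReal.ofReal_mul (by positivity)]
    · rw [indicator_of_notMem hc]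
      rw [mem_Ioo_min_one_inv_iff hx, not_and_or] at hc
      rcases hc with hc | hc <;> simp [arcsineDensity, hc]
  rw [hintegrand, lintegral_indicator measurableSet_Ioo,
    lintegral_Ioo_ofReal_deriv_eq_sub (by positivity) (continuousOn_arcsineQuotientPrimitive hx hx1)
      (fun c hc => hasDerivAt_arcsineQuotientPrimitive hx hc)
      (fun c hc => by have := hc.1; positivity),
    arcsineQuotientPrimitive_min_one_inv_sub_zero hx hx1]

end QuotientDensity

/-- If θ, α are independent and each uniform on [0,π/2], then X = sin θ / cos α
    has density (2/(π²x))·log|(1+x)/(1−x)| on (0,∞). -/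
theorem sin_div_cos_pdf :
    Measure.map (fun p : ℝ × ℝ => Real.sin p.1 / Real.cos p.2)
        ((unif 0 (π / 2)).prod (unif 0 (π / 2))) =
      volume.withDensity (fun x =>
        if 0 < x then ENNReal.ofReal (2 / (π ^ 2 * x) * Real.log |(1 + x) / (1 - x)|)
        else 0) := by
  have hsin_cos : (fun p : ℝ × ℝ => sin p.1 / cos p.2) = (fun q => q.1 / q.2) ∘ Prod.map sin cos :=
    rfl
  rw [hsin_cos, ← Measure.map_map (by fun_prop) (measurable_sin.prodMap measurable_cos),
    ← Measure.map_prod_map _ _ measurable_sin measurable_cos, map_sin_unif, map_cos_unif,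
    map_div_prod_withDensity measurable_arcsineDensity measurable_arcsineDensity]
  refine withDensity_congr_ae ((volume.ae_ne 1).mono fun x hx1 => ?_)
  dsimp only
  split_ifs with hx
  · exact lintegral_arcsineDensity_quotient_of_pos hx hx1
  · exact lintegral_arcsineDensity_quotient_of_nonpos (not_lt.1 hx)
end

section
/- If θ is uniform on [0,2π] and α is uniform on [0,π/2], independent, then W = cos²(θ)/sin²(α) has probability density h(w) = (1/(π²w))·log|(√w+1)/(√w−1)| for w > 0. -/
open MeasureTheory Real Set

/-!
Given `α`, `|cos θ|` is arcsine distributed, so `P(W ≤ w | α) = (2/π) arcsin (√w sin α)` and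
`P(W ≤ w) = (4/π²) ∫₀^{π/2} arcsin (√w sin α) dα`. Differentiating in `w` under the integral gives
the joint density `j(t, α) = (2/π²) sin α / (√t √(1 - t sin² α))` of `(W, α)`; integrating out `α`
with the primitive `-(2/(π² t)) log (√t cos α + √(1 - t sin² α))`, cut off where `sin α = 1/√t`
when `t > 1`, yields `(2/(π² t)) (log (√t + 1) - log √|1 - t|)`, which is the claimed density.
Both sides are compared on half-lines `(-∞, w]`, exchanging the two integrations by Tonelli.
-/

instance isFiniteMeasure_unif (a b : ℝ) : IsFiniteMeasure (unif a b) where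
  measure_univ_lt_top := by
    simp only [unif, Measure.smul_apply, smul_eq_mul, Measure.restrict_apply_univ, volume_Icc]
    exact (ENNReal.inv_mul_le_one _).trans_lt ENNReal.one_lt_top

lemma unif_apply (a b : ℝ) (s : Set ℝ) :
    unif a b s = (ENNReal.ofReal (b - a))⁻¹ * volume (s ∩ Icc a b) := by
  rw [unif, Measure.smul_apply, smul_eq_mul, Measure.restrict_apply' measurableSet_Icc]

lemma lintegral_unif (a b : ℝ) (f : ℝ → ENNReal) :
    ∫⁻ x, f x ∂unif a b = (ENNReal.ofReal (b - a))⁻¹ * ∫⁻ x in Icc a b, f x := by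
  rw [unif, lintegral_smul_measure, smul_eq_mul]

lemma withDensity_ite_pos_apply_Iic (f : ℝ → ENNReal) (w : ℝ) :
    volume.withDensity (fun x => if 0 < x then f x else 0) (Iic w) = ∫⁻ x in Ioo 0 w, f x := by
  have hf : (fun x : ℝ => if 0 < x then f x else 0) = (Ioi 0).indicator f := by
    ext x; simp [indicator]
  rw [withDensity_apply _ measurableSet_Iic, hf, setLIntegral_indicator measurableSet_Ioi,
    Ioi_inter_Iic, setLIntegral_congr Ioo_ae_eq_Ioc]

lemma lintegral_Ioo_ofReal_eq_sub_of_hasDerivAt {f F : ℝ → ℝ} {a b : ℝ} (hab : a ≤ b)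
    (hcont : ContinuousOn F (Icc a b)) (hderiv : ∀ x ∈ Ioo a b, HasDerivAt F (f x) x)
    (hf : ∀ x ∈ Ioo a b, 0 ≤ f x) :
    ∫⁻ x in Ioo a b, ENNReal.ofReal (f x) = ENNReal.ofReal (F b - F a) := by
  have hint : IntegrableOn f (Ioc a b) :=
    intervalIntegral.integrableOn_deriv_of_nonneg hcont hderiv hf
  rw [← ofReal_integral_eq_lintegral_ofReal (hint.mono_set Ioo_subset_Ioc_self)
      ((ae_restrict_iff' measurableSet_Ioo).2 (ae_of_all _ hf)),
    ← integral_Ioc_eq_integral_Ioo, ← intervalIntegral.integral_of_le hab,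
    intervalIntegral.integral_eq_sub_of_hasDeriv_right_of_le hab hcont
      (fun x hx => (hderiv x hx).hasDerivWithinAt)
      ((intervalIntegrable_iff_integrableOn_Ioc_of_le hab).2 hint)]

lemma setLIntegral_Ioo_eq_min_of_eqOn_zero {f : ℝ → ENNReal} {a b c : ℝ}
    (hf : EqOn f 0 (Ico c b)) : ∫⁻ x in Ioo a b, f x = ∫⁻ x in Ioo a (min b c), f x := by
  rw [← lintegral_inter_add_sdiff _ _ measurableSet_Iio, Ioo_inter_Iio,
    setLIntegral_eq_zero (measurableSet_Ioo.diff measurableSet_Iio), add_zero]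
  exact hf.mono fun x hx => mem_Ico.2 ⟨not_lt.1 hx.2, hx.1.2⟩

lemma arcsin_min_one (x : ℝ) : arcsin (min x 1) = arcsin x := by
  rcases le_total x 1 with h | h
  · rw [min_eq_left h]
  · rw [min_eq_right h, arcsin_one, arcsin_of_one_le h]

lemma log_abs_sqrt_add_one_div_sqrt_sub_one {t : ℝ} (ht : 0 ≤ t) (ht1 : t ≠ 1) :
    log |(√t + 1) / (√t - 1)| = 2 * (log (√t + 1) - log √|1 - t|) := by
  have hp : 0 < √t + 1 := by positivity
  have hm : √t - 1 ≠ 0 := by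
    rw [sub_ne_zero, Ne, sqrt_eq_one]; exact ht1
  have hfac : |1 - t| = (√t + 1) * |√t - 1| := by
    rw [abs_sub_comm, ← abs_of_pos hp, ← abs_mul]
    congr 1
    linear_combination (sq_sqrt ht).symm
  rw [log_sqrt (abs_nonneg _), hfac, log_mul hp.ne' (abs_ne_zero.2 hm), log_abs, log_div hp.ne' hm,
    log_abs]
  ring

lemma le_cos_iff_le_arccos {x y : ℝ} (hx : x ∈ Icc 0 π) (hy₁ : -1 ≤ y) (hy₂ : y ≤ 1) :
    y ≤ cos x ↔ x ≤ arccos y := by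
  rw [← cos_arccos hy₁ hy₂, strictAntiOn_cos.le_iff_ge ⟨arccos_nonneg y, arccos_le_pi y⟩ hx,
    cos_arccos hy₁ hy₂]

lemma cos_le_iff_arccos_le {x y : ℝ} (hx : x ∈ Icc 0 π) (hy₁ : -1 ≤ y) (hy₂ : y ≤ 1) :
    cos x ≤ y ↔ arccos y ≤ x := by
  rw [← cos_arccos hy₁ hy₂, strictAntiOn_cos.le_iff_ge hx ⟨arccos_nonneg y, arccos_le_pi y⟩,
    cos_arccos hy₁ hy₂]

lemma setOf_abs_cos_le_inter_Icc_zero_pi {s : ℝ} (hs₀ : 0 ≤ s) (hs₁ : s ≤ 1) :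
    {x | |cos x| ≤ s} ∩ Icc 0 π = Icc (arccos s) (arccos (-s)) := by
  ext x
  constructor
  · rintro ⟨hcos, hx⟩
    rw [mem_ofPred_eq, abs_le] at hcos
    exact ⟨(cos_le_iff_arccos_le hx (by linarith) hs₁).1 hcos.2,
      (le_cos_iff_le_arccos hx (by linarith) (by linarith)).1 hcos.1⟩
  · rintro ⟨h₁, h₂⟩
    have hx : x ∈ Icc 0 π := ⟨(arccos_nonneg s).trans h₁, h₂.trans (arccos_le_pi _)⟩
    exact ⟨abs_le.2 ⟨(le_cos_iff_le_arccos hx (by linarith) (by linarith)).2 h₂,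
      (cos_le_iff_arccos_le hx (by linarith) hs₁).2 h₁⟩, hx⟩

lemma volume_abs_cos_le_inter_Icc_zero_pi {s : ℝ} (hs₀ : 0 ≤ s) (hs₁ : s ≤ 1) :
    volume ({x | |cos x| ≤ s} ∩ Icc 0 π) = ENNReal.ofReal (2 * arcsin s) := by
  rw [setOf_abs_cos_le_inter_Icc_zero_pi hs₀ hs₁, volume_Icc, arccos_neg,
    arcsin_eq_pi_div_two_sub_arccos]
  ring_nf

-- `|cos|` is `π`-periodic, so the second half of `[0, 2π]` is a translate of the first.
lemma volume_abs_cos_le_inter_Icc_zero_two_pi {s : ℝ} (hs₀ : 0 ≤ s) (hs₁ : s ≤ 1) :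
    volume ({x | |cos x| ≤ s} ∩ Icc 0 (2 * π)) = ENNReal.ofReal (4 * arcsin s) := by
  set A := {x | |cos x| ≤ s}
  have hA : MeasurableSet (A ∩ Icc 0 π) :=
    (measurableSet_le (by fun_prop) measurable_const).inter measurableSet_Icc
  have hsplit : A ∩ Icc 0 (2 * π) = A ∩ Icc 0 π ∪ (· + -π) ⁻¹' (A ∩ Icc 0 π) := by
    ext x
    simp only [A, mem_union, mem_inter_iff, mem_preimage, mem_ofPred_eq, mem_Icc, ← sub_eq_add_neg,
      cos_sub_pi, abs_neg]
    constructor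
    · rintro ⟨hcos, hx₀, hx₁⟩
      rcases le_total x π with hx | hx
      · exact .inl ⟨hcos, hx₀, hx⟩
      · exact .inr ⟨hcos, by linarith, by linarith⟩
    · rintro (⟨hcos, hx₀, hx₁⟩ | ⟨hcos, hx₀, hx₁⟩)
      · exact ⟨hcos, hx₀, by linarith [pi_pos]⟩
      · exact ⟨hcos, by linarith, by linarith⟩
  have hnull : volume (A ∩ Icc 0 π ∩ (· + -π) ⁻¹' (A ∩ Icc 0 π)) = 0 := by
    refine measure_mono_null (fun x hx => ?_) (measure_singleton π)
    simp only [mem_inter_iff, mem_preimage, mem_Icc] at hx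
    exact le_antisymm hx.1.2.2 (by linarith [hx.2.2.1])
  rw [hsplit, measure_union₀ (hA.preimage (measurable_add_const _)).nullMeasurableSet hnull,
    measure_preimage_add_right, volume_abs_cos_le_inter_Icc_zero_pi hs₀ hs₁,
    ← ENNReal.ofReal_add (by linarith [arcsin_nonneg.2 hs₀]) (by linarith [arcsin_nonneg.2 hs₀])]
  ring_nf

lemma volume_cos_sq_div_le_inter_Icc {α w : ℝ} (hα : 0 < sin α) :
    volume ({x | cos x ^ 2 / sin α ^ 2 ≤ w} ∩ Icc 0 (2 * π)) =
      ENNReal.ofReal (4 * arcsin (√w * sin α)) := by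
  rcases lt_or_ge w 0 with hw | hw
  · have hempty : {x | cos x ^ 2 / sin α ^ 2 ≤ w} = ∅ :=
      eq_empty_of_forall_notMem fun x hx => (hw.trans_le (by positivity)).not_ge hx
    rw [hempty, empty_inter, measure_empty, sqrt_eq_zero'.2 hw.le, zero_mul, arcsin_zero,
      mul_zero, ENNReal.ofReal_zero]
  have hset : {x | cos x ^ 2 / sin α ^ 2 ≤ w} = {x | |cos x| ≤ min (√w * sin α) 1} := by
    ext x
    have hsq : w * sin α ^ 2 = (√w * sin α) ^ 2 := by rw [mul_pow, sq_sqrt hw]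
    rw [mem_ofPred_eq, mem_ofPred_eq, le_min_iff, and_iff_left (abs_cos_le_one x),
      div_le_iff₀ (by positivity), hsq, ← sq_abs, sq_le_sq₀ (abs_nonneg _) (by positivity)]
  rw [hset, volume_abs_cos_le_inter_Icc_zero_two_pi (by positivity) (min_le_right _ _),
    arcsin_min_one]

lemma map_cos_sq_div_sin_sq_apply_Iic (w : ℝ) :
    Measure.map (fun p : ℝ × ℝ => cos p.1 ^ 2 / sin p.2 ^ 2)
        ((unif 0 (2 * π)).prod (unif 0 (π / 2))) (Iic w) =
      ∫⁻ α in Ioo 0 (π / 2), ENNReal.ofReal (4 / π ^ 2 * arcsin (√w * sin α)) := by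
  have hmeas : Measurable fun p : ℝ × ℝ => cos p.1 ^ 2 / sin p.2 ^ 2 := by fun_prop
  rw [Measure.map_apply hmeas measurableSet_Iic, Measure.prod_apply_symm (hmeas measurableSet_Iic),
    lintegral_unif, sub_zero, ← setLIntegral_congr Ioo_ae_eq_Icc, ← lintegral_const_mul' _ _
      (ENNReal.inv_ne_top.2 (by simp [pi_pos]))]
  refine setLIntegral_congr_fun measurableSet_Ioo fun α hα => ?_
  have hsin : 0 < sin α := sin_pos_of_pos_of_lt_pi hα.1 (by linarith [hα.2, pi_pos])
  simp only [unif_apply, sub_zero, preimage, mem_Iic, mem_ofPred_eq]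
  rw [volume_cos_sq_div_le_inter_Icc hsin, ← ENNReal.ofReal_inv_of_pos (by positivity),
    ← ENNReal.ofReal_inv_of_pos (by positivity), ← ENNReal.ofReal_mul (by positivity),
    ← ENNReal.ofReal_mul (by positivity)]
  congr 1
  field_simp

/-- The density of `(W, α)`: the density `2 / π` of `α` times the density
`sin α / (π √t √(1 - t sin² α))` of `W` given `α`. It vanishes where `t * sin α ^ 2 ≥ 1`,
by the junk values of `√` and `/`. -/
noncomputable def jointDensity (t α : ℝ) : ℝ :=
  2 / π ^ 2 * (sin α / (√t * √(1 - t * sin α ^ 2)))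

lemma jointDensity_nonneg {t α : ℝ} (hα : 0 ≤ sin α) : 0 ≤ jointDensity t α := by
  have := pi_pos
  unfold jointDensity
  positivity

lemma jointDensity_eq_zero {t α : ℝ} (h : 1 ≤ t * sin α ^ 2) : jointDensity t α = 0 := by
  rw [jointDensity, sqrt_eq_zero'.2 (show 1 - t * sin α ^ 2 ≤ 0 by linarith), mul_zero, div_zero,
    mul_zero]

lemma measurable_jointDensity : Measurable (Function.uncurry jointDensity) := by
  unfold jointDensity
  fun_prop

lemma hasDerivAt_arcsin_sqrt_mul_sin {t α : ℝ} (ht : 0 < t) (hlt : t * sin α ^ 2 < 1) :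
    HasDerivAt (fun u => 4 / π ^ 2 * arcsin (√u * sin α)) (jointDensity t α) t := by
  have hsq : (√t * sin α) ^ 2 = t * sin α ^ 2 := by rw [mul_pow, sq_sqrt ht.le]
  have habs : |√t * sin α| < 1 := by
    rw [← sq_lt_one_iff_abs_lt_one, hsq]; exact hlt
  refine (((hasDerivAt_arcsin (abs_lt.1 habs).1.ne' (abs_lt.1 habs).2.ne).comp t
    ((hasDerivAt_sqrt ht.ne').mul_const (sin α))).const_mul (4 / π ^ 2)).congr_deriv ?_
  rw [jointDensity, hsq]
  field_simp
  ring

lemma hasDerivAt_log_sqrt_mul_cos_add_sqrt {t α : ℝ} (ht : 0 < t) (hlt : t * sin α ^ 2 < 1)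
    (hcos : 0 ≤ cos α) :
    HasDerivAt (fun β => -(2 / (π ^ 2 * t)) * log (√t * cos β + √(1 - t * sin β ^ 2)))
      (jointDensity t α) α := by
  have hq : 0 < √(1 - t * sin α ^ 2) := sqrt_pos.2 (by linarith)
  have hsqrt : 0 < √t := sqrt_pos.2 ht
  have hu : 0 < √t * cos α + √(1 - t * sin α ^ 2) := by positivity
  have hinner : HasDerivAt (fun β => 1 - t * sin β ^ 2) (-(t * (2 * sin α * cos α))) α := by
    simpa using (((hasDerivAt_sin α).pow 2).const_mul t).const_sub 1
  refine ((((hasDerivAt_cos α).const_mul √t).add (hinner.sqrt (by linarith))).log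
    hu.ne').const_mul (-(2 / (π ^ 2 * t))) |>.congr_deriv ?_
  simp only [jointDensity, Pi.add_apply]
  field_simp
  linear_combination sin α * √(1 - t * sin α ^ 2) * sq_sqrt ht.le

lemma setLIntegral_jointDensity_fst {α : ℝ} (hα : 0 < sin α) (w : ℝ) :
    ∫⁻ t in Ioo 0 w, ENNReal.ofReal (jointDensity t α) =
      ENNReal.ofReal (4 / π ^ 2 * arcsin (√w * sin α)) := by
  rcases le_or_gt w 0 with hw | hw
  · rw [Ioo_eq_empty hw.not_gt, Measure.restrict_empty, lintegral_zero_measure,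
      sqrt_eq_zero'.2 hw, zero_mul, arcsin_zero, mul_zero, ENNReal.ofReal_zero]
  set m := 1 / sin α ^ 2
  have hzero : EqOn (fun t => ENNReal.ofReal (jointDensity t α)) 0 (Ico m w) := fun t ht => by
    simp only [jointDensity_eq_zero ((div_le_iff₀ (by positivity)).1 ht.1), ENNReal.ofReal_zero,
      Pi.zero_apply]
  have hm : √m * sin α = 1 := by
    rw [sqrt_div' _ (sq_nonneg _), sqrt_one, sqrt_sq hα.le, one_div_mul_cancel hα.ne']
  rw [setLIntegral_Ioo_eq_min_of_eqOn_zero hzero,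
    lintegral_Ioo_ofReal_eq_sub_of_hasDerivAt (le_min hw.le (by positivity))
      (by fun_prop : Continuous fun u => 4 / π ^ 2 * arcsin (√u * sin α)).continuousOn
      (fun t ht => hasDerivAt_arcsin_sqrt_mul_sin ht.1
        ((lt_div_iff₀ (by positivity)).1 (ht.2.trans_le (min_le_right _ _))))
      (fun t _ => jointDensity_nonneg hα.le),
    sqrt_zero, zero_mul, arcsin_zero, mul_zero, sub_zero, sqrt_monotone.map_min,
    min_mul_of_nonneg _ _ hα.le, hm, arcsin_min_one]

lemma setLIntegral_jointDensity_snd_Ioo {t b : ℝ} (ht : 0 < t) (hb₀ : 0 ≤ b) (hb : b ≤ π / 2)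
    (hlt : ∀ α ∈ Ioo 0 b, t * sin α ^ 2 < 1) (hpos : 0 < √t * cos b + √(1 - t * sin b ^ 2)) :
    ∫⁻ α in Ioo 0 b, ENNReal.ofReal (jointDensity t α) = ENNReal.ofReal
      (2 / (π ^ 2 * t) * (log (√t + 1) - log (√t * cos b + √(1 - t * sin b ^ 2)))) := by
  have hu : ∀ α ∈ Icc 0 b, √t * cos α + √(1 - t * sin α ^ 2) ≠ 0 := by
    rintro α ⟨hα₀, hαb⟩
    rcases hαb.eq_or_lt with rfl | hαb
    · exact hpos.ne'
    have : 0 < cos α := cos_pos_of_mem_Ioo ⟨by linarith [pi_pos], by linarith⟩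
    positivity
  rw [lintegral_Ioo_ofReal_eq_sub_of_hasDerivAt
    (F := fun β => -(2 / (π ^ 2 * t)) * log (√t * cos β + √(1 - t * sin β ^ 2))) hb₀
    (continuousOn_const.mul ((by fun_prop : Continuous fun β =>
      √t * cos β + √(1 - t * sin β ^ 2)).continuousOn.log hu))
    (fun α hα => hasDerivAt_log_sqrt_mul_cos_add_sqrt ht (hlt α hα)
      (cos_nonneg_of_mem_Icc ⟨by linarith [hα.1, pi_pos], by linarith [hα.2]⟩))
    (fun α hα => jointDensity_nonneg
      (sin_nonneg_of_nonneg_of_le_pi hα.1.le (by linarith [hα.2, pi_pos])))]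
  simp only [cos_zero, sin_zero, mul_one, zero_pow two_ne_zero, mul_zero, sub_zero, sqrt_one]
  ring_nf

lemma setLIntegral_jointDensity_snd {t : ℝ} (ht : 0 < t) (ht₁ : t ≠ 1) :
    ∫⁻ α in Ioo 0 (π / 2), ENNReal.ofReal (jointDensity t α) =
      ENNReal.ofReal (1 / (π ^ 2 * t) * log |(√t + 1) / (√t - 1)|) := by
  rw [log_abs_sqrt_add_one_div_sqrt_sub_one ht.le ht₁]
  rcases ht₁.lt_or_gt with ht₁ | ht₁
  · have hq : √(1 - t * sin (π / 2) ^ 2) = √|1 - t| := by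
      rw [sin_pi_div_two, one_pow, mul_one, abs_of_pos (by linarith)]
    have hpos : 0 < √t * cos (π / 2) + √(1 - t * sin (π / 2) ^ 2) := by
      rw [cos_pi_div_two, mul_zero, zero_add, hq]
      exact sqrt_pos.2 (abs_pos.2 (by linarith))
    rw [setLIntegral_jointDensity_snd_Ioo ht (by positivity) le_rfl
      (fun α _ => by nlinarith [sin_sq_le_one α]) hpos, hq, cos_pi_div_two, mul_zero, zero_add]
    ring_nf
  set A := arcsin (√t)⁻¹
  have hinv : (√t)⁻¹ < 1 := inv_lt_one_of_one_lt₀ (by rwa [lt_sqrt zero_le_one, one_pow])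
  have hA₀ : 0 < A := arcsin_pos.2 (by positivity)
  have hA : A < π / 2 := arcsin_lt_pi_div_two.2 hinv
  have hsinA : sin A = (√t)⁻¹ := sin_arcsin (by linarith [inv_pos.2 (sqrt_pos.2 ht)]) hinv.le
  have htA : t * sin A ^ 2 = 1 := by rw [hsinA, inv_pow, sq_sqrt ht.le, mul_inv_cancel₀ ht.ne']
  have hcosA : √t * cos A = √|1 - t| := by
    rw [cos_arcsin, ← sqrt_mul ht.le, abs_of_neg (by linarith), neg_sub, inv_pow, sq_sqrt ht.le,
      mul_sub, mul_one, mul_inv_cancel₀ ht.ne']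
  have hzero : EqOn (fun α => ENNReal.ofReal (jointDensity t α)) 0 (Ico A (π / 2)) := by
    rintro α ⟨hAα, hα⟩
    have : sin A ≤ sin α := sin_le_sin_of_le_of_le_pi_div_two (by linarith [pi_pos]) hα.le hAα
    have : 0 ≤ sin A := hsinA ▸ by positivity
    have h1 : 1 ≤ t * sin α ^ 2 := by rw [← htA]; gcongr
    simp only [jointDensity_eq_zero h1, ENNReal.ofReal_zero, Pi.zero_apply]
  rw [setLIntegral_Ioo_eq_min_of_eqOn_zero hzero, min_eq_right hA.le,
    setLIntegral_jointDensity_snd_Ioo ht hA₀.le hA.le ?_ ?_, htA, sub_self, sqrt_zero, add_zero,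
    hcosA]
  · ring_nf
  · rintro α ⟨hα₀, hαA⟩
    rw [← htA]
    have := sin_lt_sin_of_lt_of_le_pi_div_two (by linarith [pi_pos]) hA.le hαA
    have := sin_nonneg_of_nonneg_of_le_pi hα₀.le (by linarith [pi_pos])
    gcongr
  · rw [htA, sub_self, sqrt_zero, add_zero, hcosA]
    exact sqrt_pos.2 (abs_pos.2 (by linarith))

lemma setLIntegral_Ioo_cos_sq_div_sin_sq_pdf (w : ℝ) :
    ∫⁻ t in Ioo 0 w, ENNReal.ofReal (1 / (π ^ 2 * t) * log |(√t + 1) / (√t - 1)|) =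
      ∫⁻ α in Ioo 0 (π / 2), ENNReal.ofReal (4 / π ^ 2 * arcsin (√w * sin α)) :=
  calc _ = ∫⁻ t in Ioo 0 w, ∫⁻ α in Ioo 0 (π / 2), ENNReal.ofReal (jointDensity t α) := by
        refine setLIntegral_congr_fun_ae measurableSet_Ioo ?_
        filter_upwards [volume.ae_ne 1] with t ht₁ ht
        exact (setLIntegral_jointDensity_snd ht.1 ht₁).symm
    _ = ∫⁻ α in Ioo 0 (π / 2), ∫⁻ t in Ioo 0 w, ENNReal.ofReal (jointDensity t α) :=
        lintegral_lintegral_swap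
          (ENNReal.measurable_ofReal.comp measurable_jointDensity).aemeasurable
    _ = _ := setLIntegral_congr_fun measurableSet_Ioo fun α hα =>
        setLIntegral_jointDensity_fst
          (sin_pos_of_pos_of_lt_pi hα.1 (by linarith [hα.2, pi_pos])) w

/-- If θ is uniform on [0,2π] and α is uniform on [0,π/2], independent, then
    W = cos²θ/sin²α has density (1/(π²w))·log|(√w+1)/(√w−1)| on (0,∞). -/
theorem cos_sq_div_sin_sq_pdf :
    Measure.map (fun p : ℝ × ℝ => Real.cos p.1 ^ 2 / Real.sin p.2 ^ 2)
        ((unif 0 (2 * π)).prod (unif 0 (π / 2))) =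
      volume.withDensity (fun w =>
        if 0 < w then
          ENNReal.ofReal (1 / (π ^ 2 * w) *
            Real.log |(Real.sqrt w + 1) / (Real.sqrt w - 1)|)
        else 0) := by
  refine Measure.ext_of_Iic _ _ fun w => ?_
  rw [map_cos_sq_div_sin_sq_apply_Iic, withDensity_ite_pos_apply_Iic,
    setLIntegral_Ioo_cos_sq_div_sin_sq_pdf]
end
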